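/- Suppose L: R^N → R is twice continuously differentiable, attains its minimum at w* with ∇L(w*) = 0 and Hessian H*, and E[(w^t − w*)(w^t − w*)ᵀ] = (1/t) F⁻¹ + O(1/t²) with H* = F positive definite. If additionally E[‖w^t − w*‖³] = O(t^{-3/2}), then E[L(w^t)] − L(w*) = N/(2t) + O(t^{-3/2}). -/

import Mathlib

open MeasureTheory Matrix

/-!
Taking expectations in the Taylor expansion, the quadratic term becomes
`½ ∑ᵢⱼ Fᵢⱼ E[(wᵗ-w*)ᵢ(wᵗ-w*)ⱼ] = ½ ∑ᵢⱼ Fᵢⱼ (F⁻¹ᵢⱼ / t + O(1/t²))`, and since `F` is symmetric,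
`∑ᵢⱼ Fᵢⱼ F⁻¹ᵢⱼ = tr (F⁻¹ F) = N`. The remainder is bounded pointwise by the cube of the distance
to `w*`, so its expectation is `O(t^{-3/2})` by the third-moment assumption.
-/

namespace Matrix

variable {n R : Type*} [Fintype n]

theorem dotProduct_mulVec_eq_sum_sum [CommSemiring R] (A : Matrix n n R) (x : n → R) :
    x ⬝ᵥ A *ᵥ x = ∑ i, ∑ j, A i j * (x i * x j) := by
  simp only [dotProduct, mulVec, Finset.mul_sum]
  exact Finset.sum_congr rfl fun i _ => Finset.sum_congr rfl fun j _ => by ring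

theorem sum_sum_mul_inv_apply_of_isSymm [DecidableEq n] [CommRing R] {A : Matrix n n R}
    (hA : A.IsSymm) (hdet : IsUnit A.det) :
    ∑ i, ∑ j, A i j * A⁻¹ i j = Fintype.card n :=
  calc ∑ i, ∑ j, A i j * A⁻¹ i j = ∑ i, ∑ j, A⁻¹ i j * A j i := by
        simp only [hA.apply, mul_comm]
    _ = trace (A⁻¹ * A) := by simp only [trace, diag, mul_apply]
    _ = Fintype.card n := by rw [nonsing_inv_mul _ hdet, trace_one]

theorem abs_sum_sum_mul_le (A B : Matrix n n ℝ) {ε : ℝ} (hB : ∀ i j, |B i j| ≤ ε) :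
    |∑ i, ∑ j, A i j * B i j| ≤ (∑ i, ∑ j, |A i j|) * ε :=
  calc |∑ i, ∑ j, A i j * B i j| ≤ ∑ i, ∑ j, |A i j * B i j| :=
        (Finset.abs_sum_le_sum_abs _ _).trans
          (Finset.sum_le_sum fun i _ => Finset.abs_sum_le_sum_abs _ _)
    _ ≤ ∑ i, ∑ j, |A i j| * ε := by
        gcongr with i _ j _
        rw [abs_mul]
        exact mul_le_mul_of_nonneg_left (hB i j) (abs_nonneg _)
    _ = (∑ i, ∑ j, |A i j|) * ε := by simp only [Finset.sum_mul]

end Matrix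

namespace MeasureTheory

variable {Ω n : Type*} [Fintype n] [MeasurableSpace Ω] {μ : Measure Ω}

theorem integrable_dotProduct_mulVec (A : Matrix n n ℝ) {X : Ω → n → ℝ}
    (hX : ∀ i j, Integrable (fun ω => X ω i * X ω j) μ) :
    Integrable (fun ω => X ω ⬝ᵥ A *ᵥ X ω) μ := by
  simp only [Matrix.dotProduct_mulVec_eq_sum_sum]
  exact integrable_finsetSum _ fun i _ => integrable_finsetSum _ fun j _ => (hX i j).const_mul _

theorem integral_dotProduct_mulVec (A : Matrix n n ℝ) {X : Ω → n → ℝ}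
    (hX : ∀ i j, Integrable (fun ω => X ω i * X ω j) μ) :
    ∫ ω, X ω ⬝ᵥ A *ᵥ X ω ∂μ = ∑ i, ∑ j, A i j * ∫ ω, X ω i * X ω j ∂μ := by
  simp only [Matrix.dotProduct_mulVec_eq_sum_sum]
  rw [integral_finsetSum _ fun i _ =>
    integrable_finsetSum _ fun j _ => (hX i j).const_mul (A i j)]
  refine Finset.sum_congr rfl fun i _ => ?_
  rw [integral_finsetSum _ fun j _ => (hX i j).const_mul (A i j)]
  simp only [integral_const_mul]

theorem integral_sub_eq_of_taylor [IsProbabilityMeasure μ] {L R : (n → ℝ) → ℝ}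
    {A : Matrix n n ℝ} {x₀ : n → ℝ}
    (hTaylor : ∀ x, L x - L x₀ = (1 / 2) * ((x - x₀) ⬝ᵥ A *ᵥ (x - x₀)) + R x)
    {w : Ω → n → ℝ} (hL : Integrable (fun ω => L (w ω)) μ)
    (hX : ∀ i j, Integrable (fun ω => (w ω i - x₀ i) * (w ω j - x₀ j)) μ) :
    ∫ ω, L (w ω) ∂μ - L x₀ =
      (1 / 2) * ∑ i, ∑ j, A i j * ∫ ω, (w ω i - x₀ i) * (w ω j - x₀ j) ∂μ
        + ∫ ω, R (w ω) ∂μ := by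
  have hQ : Integrable (fun ω => (1 / 2) * ((w ω - x₀) ⬝ᵥ A *ᵥ (w ω - x₀))) μ :=
    (integrable_dotProduct_mulVec A hX).const_mul _
  have hR : Integrable (fun ω => R (w ω)) μ := by
    refine ((hL.sub (integrable_const (L x₀))).sub hQ).congr (ae_of_all _ fun ω => ?_)
    simp only [Pi.sub_apply, hTaylor]
    ring
  calc ∫ ω, L (w ω) ∂μ - L x₀ = ∫ ω, (L (w ω) - L x₀) ∂μ := by
        rw [integral_sub hL (integrable_const _), integral_const, probReal_univ, one_smul]
    _ = ∫ ω, (1 / 2) * ((w ω - x₀) ⬝ᵥ A *ᵥ (w ω - x₀)) ∂μ + ∫ ω, R (w ω) ∂μ := by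
        simp only [hTaylor]
        exact integral_add hQ hR
    _ = _ := by
        rw [integral_const_mul, integral_dotProduct_mulVec (X := fun ω => w ω - x₀) A hX]
        rfl

theorem abs_integral_le_mul_of_abs_le_mul {f g : Ω → ℝ} {c b : ℝ} (hc : 0 ≤ c)
    (hg : Integrable g μ) (hfg : ∀ ω, |f ω| ≤ c * g ω) (hb : ∫ ω, g ω ∂μ ≤ b) :
    |∫ ω, f ω ∂μ| ≤ c * b :=
  calc |∫ ω, f ω ∂μ| ≤ ∫ ω, c * g ω ∂μ :=
        norm_integral_le_of_norm_le (f := f) (hg.const_mul c) (ae_of_all _ hfg)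
    _ = c * ∫ ω, g ω ∂μ := integral_const_mul c _
    _ ≤ c * b := mul_le_mul_of_nonneg_left hb hc

end MeasureTheory

theorem div_sq_le_abs_mul_rpow {t : ℝ} (ht : 1 ≤ t) (c : ℝ) :
    c / t ^ 2 ≤ |c| * t ^ (-(3 : ℝ) / 2) :=
  calc c / t ^ 2 ≤ |c| * t ^ (-2 : ℝ) := by
        rw [Real.rpow_neg (by linarith), Real.rpow_two, ← div_eq_mul_inv]
        gcongr
        exact le_abs_self c
    _ ≤ |c| * t ^ (-(3 : ℝ) / 2) :=
        mul_le_mul_of_nonneg_left (Real.rpow_le_rpow_of_exponent_le ht (by norm_num))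
          (abs_nonneg c)

/-- If `L` is minimized at `w*` with `∇L(w*) = 0` and Hessian
`H* = F` positive definite (second-order Taylor expansion with cubic
remainder), and the iterates satisfy `E[(wᵗ−w*)(wᵗ−w*)ᵀ] = (1/t) F⁻¹ + O(1/t²)`
and `E[‖wᵗ−w*‖³] = O(t^{-3/2})`, then
`E[L(wᵗ)] − L(w*) = N/(2t) + O(t^{-3/2})`. -/
theorem fedes_loss_rate
    {N : ℕ} {Ω : Type*} [MeasurableSpace Ω] (P : Measure Ω) [IsProbabilityMeasure P]
    (L : (Fin N → ℝ) → ℝ) (wstar : Fin N → ℝ)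
    (F : Matrix (Fin N) (Fin N) ℝ) (hF : F.PosDef)
    (R : (Fin N → ℝ) → ℝ) (cR : ℝ)
    -- second-order Taylor expansion of L around its minimizer w*, Hessian H* = F
    (hTaylor : ∀ w, L w - L wstar =
      (1 / 2) * ((w - wstar) ⬝ᵥ F.mulVec (w - wstar)) + R w)
    (hR : ∀ w, |R w| ≤ cR * (∑ i, (w i - wstar i) ^ 2) ^ ((3 : ℝ) / 2))
    (w : ℕ → Ω → Fin N → ℝ)
    (hint : ∀ t, Integrable (fun ω => L (w t ω)) P)
    -- covariance: E[(wᵗ−w*)(wᵗ−w*)ᵀ] = (1/t) F⁻¹ + O(1/t²)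
    (c₂ : ℝ)
    (hcov : ∀ t : ℕ, 1 ≤ t → ∀ i j : Fin N,
      Integrable (fun ω => (w t ω i - wstar i) * (w t ω j - wstar j)) P ∧
      |(∫ ω, (w t ω i - wstar i) * (w t ω j - wstar j) ∂P) - (1 / (t : ℝ)) * F⁻¹ i j|
        ≤ c₂ / (t : ℝ) ^ 2)
    -- third moment: E[‖wᵗ−w*‖³] = O(t^{-3/2})
    (c₃ : ℝ)
    (hmom3 : ∀ t : ℕ, 1 ≤ t →
      Integrable (fun ω => (∑ i, (w t ω i - wstar i) ^ 2) ^ ((3 : ℝ) / 2)) P ∧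
      (∫ ω, (∑ i, (w t ω i - wstar i) ^ 2) ^ ((3 : ℝ) / 2) ∂P)
        ≤ c₃ * (t : ℝ) ^ (-(3 : ℝ) / 2)) :
    ∃ c : ℝ, ∃ T : ℕ, ∀ t : ℕ, T ≤ t →
      |(∫ ω, L (w t ω) ∂P) - L wstar - (N : ℝ) / (2 * t)|
        ≤ c * (t : ℝ) ^ (-(3 : ℝ) / 2) := by
  have hFsymm : F.IsSymm := IsSymm.ext fun i j => by simpa using hF.isHermitian.apply i j
  have hFdet : IsUnit F.det := isUnit_iff_ne_zero.mpr hF.det_pos.ne'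
  refine ⟨(∑ i, ∑ j, |F i j|) * |c₂| / 2 + |cR| * c₃, 1, fun t ht => ?_⟩
  have ht1 : (1 : ℝ) ≤ t := by exact_mod_cast ht
  have hsplit : (∫ ω, L (w t ω) ∂P) - L wstar - (N : ℝ) / (2 * t) =
      (1 / 2) * ∑ i, ∑ j, F i j *
        ((∫ ω, (w t ω i - wstar i) * (w t ω j - wstar j) ∂P) - (1 / (t : ℝ)) * F⁻¹ i j)
      + ∫ ω, R (w t ω) ∂P := by
    have htrace := sum_sum_mul_inv_apply_of_isSymm hFsymm hFdet
    rw [Fintype.card_fin] at htrace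
    rw [integral_sub_eq_of_taylor hTaylor (hint t) fun i j => (hcov t ht i j).1]
    simp only [mul_sub, Finset.sum_sub_distrib, mul_left_comm _ (1 / (t : ℝ)),
      ← Finset.mul_sum, htrace]
    field_simp
    ring
  have hcovariance := abs_sum_sum_mul_le F _ fun i j =>
    (hcov t ht i j).2.trans (div_sq_le_abs_mul_rpow ht1 c₂)
  have hremainder : |∫ ω, R (w t ω) ∂P| ≤ |cR| * (c₃ * (t : ℝ) ^ (-(3 : ℝ) / 2)) :=
    abs_integral_le_mul_of_abs_le_mul (abs_nonneg cR) (hmom3 t ht).1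
      (fun ω => (hR _).trans (mul_le_mul_of_nonneg_right (le_abs_self cR)
        (Real.rpow_nonneg (Finset.sum_nonneg fun i _ => sq_nonneg _) _)))
      (hmom3 t ht).2
  rw [hsplit]
  refine (abs_add_le _ _).trans ?_
  rw [abs_mul, abs_of_pos one_half_pos]
  linear_combination (1 / 2 : ℝ) * hcovariance + hremainder
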